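/- Let u and v be two distinct μ-important vertices of C. Then for every edge g lying on the unique path in C from u to v, and for each of the two connected components K of C − g, it is not the case that N(K) contains μ together with some label different from μ (i.e. either μ ∉ N(K) or N(K) ⊆ {μ}). In particular no edge on the path from u to v is μ-important. -/

import Mathlib

/-- The set of labels carried by a set `S` of vertices. -/
def labelSet {V M : Type*} (L : V → Set M) (S : Set V) : Set M :=
  ⋃ v ∈ S, L v

/-- The connected component of `u` in the graph `C` with the edge `s(u, v)` deleted.
For a tree `C` and an edge `uv`, `edgeSide C u v` and `edgeSide C v u` are the two
connected components of `C − uv`. -/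
def edgeSide {V : Type*} (C : SimpleGraph V) (u v : V) : Set V :=
  {w | (C.deleteEdges {s(u, v)}).Reachable u w}

/-- The edge `uv` of `C` is `μ`-important: for each of the two components `K` of `C − uv`,
the label set of `K` properly contains `{μ}`. -/
def ImportantEdge {V M : Type*} (C : SimpleGraph V) (L : V → Set M) (μ : M) (u v : V) :
    Prop :=
  C.Adj u v ∧
    (μ ∈ labelSet L (edgeSide C u v) ∧ labelSet L (edgeSide C u v) ≠ {μ}) ∧
    (μ ∈ labelSet L (edgeSide C v u) ∧ labelSet L (edgeSide C v u) ≠ {μ})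

/-- The graph `C` with the vertex `v` deleted (all edges incident to `v` removed). -/
def delVertex {V : Type*} (C : SimpleGraph V) (v : V) : SimpleGraph V :=
  C.deleteEdges {e : Sym2 V | v ∈ e}

/-- The connected component of `w` in `C − v`. -/
def vertComp {V : Type*} (C : SimpleGraph V) (v w : V) : Set V :=
  {x | (delVertex C v).Reachable w x}

/-- The vertex `v` of `C` is `μ`-important: every connected component `T` of `C − v`
has label set equal to `{μ}` or not containing `μ` at all. -/
def ImportantVertex {V M : Type*} (C : SimpleGraph V) (L : V → Set M) (μ : M) (v : V) :
    Prop :=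
  ∀ w : V, w ≠ v →
    labelSet L (vertComp C v w) = {μ} ∨ μ ∉ labelSet L (vertComp C v w)


/-!
On a trail from `u` to `v` through the edge `xy`, one of `u`, `v` is still joined to `y` after
deleting `xy`. Every edge of a forest is a bridge, so the side of `x` is then a connected set
avoiding that endpoint, hence lies in a single component of the graph minus that endpoint,
whose label set is `{μ}` or misses `μ`.
-/

section

open SimpleGraph

lemma labelSet_mono {V M : Type*} (L : V → Set M) {S T : Set V} (h : S ⊆ T) :
    labelSet L S ⊆ labelSet L T :=
  Set.biUnion_subset_biUnion_left h

variable {V : Type*} {C : SimpleGraph V}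

lemma edgeSide_subset_vertComp {x y w : V} (hw : w ∉ edgeSide C x y) :
    edgeSide C x y ⊆ vertComp C w x := by
  classical
  rintro z ⟨W⟩
  have hwW : w ∉ W.support := fun h ↦ hw ⟨W.takeUntil w h⟩
  refine ⟨W.transfer _ fun e he ↦ ?_⟩
  rw [delVertex, edgeSet_deleteEdges]
  refine ⟨edgeSet_mono (deleteEdges_le _) (W.edges_subset_edgeSet he), ?_⟩
  induction e with
  | h a b =>
    intro hwe
    rcases Sym2.mem_iff.mp hwe with rfl | rfl
    · exact hwW (W.fst_mem_support_of_mem_edges he)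
    · exact hwW (W.snd_mem_support_of_mem_edges he)

lemma notMem_edgeSide_of_reachable (hC : C.IsAcyclic) {x y w : V} (hxy : C.Adj x y)
    (hyw : (C.deleteEdges {s(x, y)}).Reachable y w) : w ∉ edgeSide C x y := fun hxw ↦
  isBridge_iff.mp (isAcyclic_iff_forall_isBridge.mp hC hxy) (hxw.trans hyw.symm)

variable {M : Type*} {L : V → Set M} {μ : M}

lemma ImportantVertex.labelSet_of_subset_vertComp {v w : V} (hv : ImportantVertex C L μ v)
    (hwv : w ≠ v) {S : Set V} (hS : S ⊆ vertComp C v w) :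
    μ ∉ labelSet L S ∨ labelSet L S ⊆ {μ} := by
  have hmono := labelSet_mono L hS
  rcases hv w hwv with h | h
  · exact Or.inr (h ▸ hmono)
  · exact Or.inl fun hμ ↦ h (hmono hμ)

lemma ImportantVertex.labelSet_edgeSide (hC : C.IsAcyclic) {v x y : V}
    (hv : ImportantVertex C L μ v) (hxy : C.Adj x y)
    (hyv : (C.deleteEdges {s(x, y)}).Reachable y v) :
    μ ∉ labelSet L (edgeSide C x y) ∨ labelSet L (edgeSide C x y) ⊆ {μ} := by
  have hvx := notMem_edgeSide_of_reachable hC hxy hyv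
  have hxv : x ≠ v := by
    rintro rfl
    exact hvx (Reachable.refl x)
  exact hv.labelSet_of_subset_vertComp hxv (edgeSide_subset_vertComp hvx)

lemma labelSet_edgeSide_of_mem_edges (hC : C.IsAcyclic) {u v x y : V}
    (hu : ImportantVertex C L μ u) (hv : ImportantVertex C L μ v) {p : C.Walk u v}
    (hp : p.IsTrail) (hxy : s(x, y) ∈ p.edges) :
    μ ∉ labelSet L (edgeSide C x y) ∨ labelSet L (edgeSide C x y) ⊆ {μ} := by
  have hadj := p.adj_of_mem_edges hxy
  by_cases huy : (C.deleteEdges {s(x, y)}).Reachable u y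
  · exact hu.labelSet_edgeSide hC hadj huy.symm
  · have hvy : (C.deleteEdges {s(x, y)}).Reachable v y :=
      by_contra fun hvy ↦ hp.not_mem_edges_of_not_reachable huy hvy hxy
    exact hv.labelSet_edgeSide hC hadj hvy.symm

lemma not_importantEdge_of_labelSet_edgeSide {x y : V}
    (h : μ ∉ labelSet L (edgeSide C x y) ∨ labelSet L (edgeSide C x y) ⊆ {μ}) :
    ¬ ImportantEdge C L μ x y := by
  rintro ⟨-, ⟨hμ, hne⟩, -⟩
  rcases h with h | h
  · exact h hμ
  · exact hne (h.antisymm (Set.singleton_subset_iff.mpr hμ))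

end

theorem statement_4_general {V M : Type*} (C : SimpleGraph V) (hC : C.IsTree)
    (L : V → Set M) (μ : M) (u v : V)
    (hu : ImportantVertex C L μ u) (hv : ImportantVertex C L μ v)
    (p : C.Walk u v) (hp : p.IsPath) (g₁ g₂ : V) (hmem : s(g₁, g₂) ∈ p.edges) :
    ((μ ∉ labelSet L (edgeSide C g₁ g₂) ∨ labelSet L (edgeSide C g₁ g₂) ⊆ {μ}) ∧
      (μ ∉ labelSet L (edgeSide C g₂ g₁) ∨ labelSet L (edgeSide C g₂ g₁) ⊆ {μ})) ∧
    ¬ ImportantEdge C L μ g₁ g₂ := by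
  have h₁₂ := labelSet_edgeSide_of_mem_edges hC.isAcyclic hu hv hp.isTrail hmem
  have h₂₁ := labelSet_edgeSide_of_mem_edges hC.isAcyclic hu hv hp.isTrail
    (Sym2.eq_swap ▸ hmem)
  exact ⟨⟨h₁₂, h₂₁⟩, not_importantEdge_of_labelSet_edgeSide h₁₂⟩

/-- If `u` and `v` are distinct `μ`-important vertices of the finite tree `C`,
then for every edge `g = g₁g₂` on the unique path in `C` from `u` to `v` and each of the two
components `K` of `C − g`, it is not the case that `N(K)` contains `μ` together with some
other label; in particular no edge on this path is `μ`-important. -/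
theorem statement_4 {V M : Type*} [Fintype V] (C : SimpleGraph V) (hC : C.IsTree)
    (L : V → Set M) (μ : M) (u v : V) (huv : u ≠ v)
    (hu : ImportantVertex C L μ u) (hv : ImportantVertex C L μ v)
    (p : C.Walk u v) (hp : p.IsPath) (g₁ g₂ : V) (hmem : s(g₁, g₂) ∈ p.edges) :
    ((μ ∉ labelSet L (edgeSide C g₁ g₂) ∨ labelSet L (edgeSide C g₁ g₂) ⊆ {μ}) ∧
      (μ ∉ labelSet L (edgeSide C g₂ g₁) ∨ labelSet L (edgeSide C g₂ g₁) ⊆ {μ})) ∧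
    ¬ ImportantEdge C L μ g₁ g₂ :=
  statement_4_general C hC L μ u v hu hv p hp g₁ g₂ hmem
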